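/- arXiv:1805.10468 — 2 statements merged into one kernel-verified Lean document; each statement's English description precedes it below -/
import Mathlib

section
/- For any r ∈ Spec_ε(A) and any λ ∈ F_p*, the quantity r_{R/R}(λ) for R ⊆ Spec_ε(A)\{0} satisfies (ε|A|)⁴/p · r_{R/R}(λ) ≤ E⁺(f_A, λ·f_A), where λ·f_A denotes the dilate x ↦ f_A(x/λ). -/
open Finset Complex

noncomputable def ft (p : ℕ) [NeZero p] (f : ZMod p → ℂ) (ξ : ZMod p) : ℂ :=
  ∑ x : ZMod p, f x * Complex.exp (-(2 * (Real.pi : ℂ) * Complex.I * (x.val : ℂ) * (ξ.val : ℂ)) / p)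

noncomputable def ind {p : ℕ} (A : Finset (ZMod p)) : ZMod p → ℂ :=
  fun x => if x ∈ A then 1 else 0

noncomputable def bal (p : ℕ) (A : Finset (ZMod p)) : ZMod p → ℂ :=
  fun x => ind A x - (A.card : ℂ) / p

noncomputable def spec (p : ℕ) [NeZero p] (A : Finset (ZMod p)) (ε : ℝ) : Finset (ZMod p) :=
  Finset.univ.filter fun r => ε * A.card ≤ ‖ft p (ind A) r‖

def rDiv {p : ℕ} (R : Finset (ZMod p)) (lam : ZMod p) : ℕ :=
  ((R ×ˢ R).filter fun q => q.1 = lam * q.2).card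

/-!
Subtracting the constant `#A / p` only changes the Fourier transform at `0`, and dilating by `λ`
moves frequency `ξ` to `λ ξ`. Hence every `y` with `y, λ y ∈ R` — one for each pair counted by
`rDiv R λ` — contributes `|f̂_A(y)|² |f̂_A(λ y)|² ≥ (ε |A|)⁴` to the energy sum.
-/

theorem ft_eq_sum_stdAddChar (p : ℕ) [NeZero p] (f : ZMod p → ℂ) (ξ : ZMod p) :
    ft p f ξ = ∑ x, f x * ZMod.stdAddChar (-(x * ξ)) := by
  refine Finset.sum_congr rfl fun x _ => ?_
  have hcast : -(x * ξ) = ((-(x.val * ξ.val : ℕ) : ℤ) : ZMod p) := by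
    push_cast [ZMod.natCast_zmod_val]; rfl
  rw [hcast, ZMod.stdAddChar_coe]
  push_cast
  ring_nf

theorem sum_stdAddChar_neg_mul_eq_zero (p : ℕ) [NeZero p] {ξ : ZMod p} (hξ : ξ ≠ 0) :
    ∑ x : ZMod p, ZMod.stdAddChar (-(x * ξ)) = 0 := by
  classical
  have h := AddChar.sum_mulShift (-ξ) (ZMod.isPrimitive_stdAddChar p)
  rw [if_neg (neg_ne_zero.mpr hξ)] at h
  simpa only [mul_neg, Nat.cast_zero] using h

theorem ft_sub_const_of_ne_zero (p : ℕ) [NeZero p] (f : ZMod p → ℂ) (c : ℂ) {ξ : ZMod p}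
    (hξ : ξ ≠ 0) : ft p (fun x => f x - c) ξ = ft p f ξ := by
  simp only [ft_eq_sum_stdAddChar, sub_mul, Finset.sum_sub_distrib, ← Finset.mul_sum,
    sum_stdAddChar_neg_mul_eq_zero p hξ, mul_zero, sub_zero]

theorem ft_dilate (p : ℕ) [Fact p.Prime] (f : ZMod p → ℂ) {lam : ZMod p} (hlam : lam ≠ 0)
    (ξ : ZMod p) : ft p (fun x => f (x / lam)) ξ = ft p f (lam * ξ) := by
  simp only [ft_eq_sum_stdAddChar]
  refine (Fintype.sum_equiv (Equiv.mulLeft₀ lam hlam) _ _ fun u => ?_).symm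
  rw [Equiv.mulLeft₀_apply, mul_div_cancel_left₀ _ hlam, mul_left_comm, mul_assoc]

theorem rDiv_eq_card_filter {p : ℕ} (R : Finset (ZMod p)) (lam : ZMod p) :
    rDiv R lam = #{y ∈ R | lam * y ∈ R} := by
  refine Finset.card_nbij' Prod.snd (fun y => (lam * y, y)) ?_ ?_ ?_ ?_
  · rintro ⟨x, y⟩ hxy
    simp only [Finset.coe_filter, Finset.mem_product, Set.mem_ofPred_eq] at hxy ⊢
    exact ⟨hxy.1.2, hxy.2 ▸ hxy.1.1⟩
  · intro y hy
    simp only [Finset.coe_filter, Finset.mem_product, Set.mem_ofPred_eq] at hy ⊢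
    exact ⟨⟨hy.2, hy.1⟩, trivial⟩
  · rintro ⟨x, y⟩ hxy
    simp only [Finset.coe_filter, Finset.mem_product, Set.mem_ofPred_eq] at hxy
    rw [hxy.2]
  · exact fun _ _ => rfl

theorem le_norm_ft_bal_of_mem_spec (p : ℕ) [NeZero p] {A : Finset (ZMod p)} {ε : ℝ}
    {r : ZMod p} (hr : r ∈ (spec p A ε).erase 0) : ε * #A ≤ ‖ft p (bal p A) r‖ := by
  obtain ⟨hr0, hspec⟩ := Finset.mem_erase.mp hr
  unfold bal
  rw [ft_sub_const_of_ne_zero p _ _ hr0]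
  exact (Finset.mem_filter.mp hspec).2

theorem stmt9 (p : ℕ) [Fact p.Prime] (A : Finset (ZMod p))
    (ε : ℝ) (hε : ε ∈ Set.Ioc (0 : ℝ) 1)
    (R : Finset (ZMod p)) (hR : R ⊆ (spec p A ε).erase 0)
    (lam : ZMod p) (hlam : lam ≠ 0) :
    (ε * A.card) ^ 4 / p * (rDiv R lam : ℝ)
      ≤ (1 / (p : ℝ)) * ∑ ξ : ZMod p,
          ‖ft p (bal p A) ξ‖ ^ 2
            * ‖ft p (fun x => bal p A (x / lam)) ξ‖ ^ 2 := by
  set E : ZMod p → ℝ := fun ξ =>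
    ‖ft p (bal p A) ξ‖ ^ 2 * ‖ft p (fun x => bal p A (x / lam)) ξ‖ ^ 2
  have hεA : 0 ≤ ε * #A := by have := hε.1; positivity
  have hE : ∀ ξ ∈ {y ∈ R | lam * y ∈ R}, (ε * #A) ^ 4 ≤ E ξ := by
    intro ξ hξ
    obtain ⟨hξR, hlamξR⟩ := Finset.mem_filter.mp hξ
    have h₁ := le_norm_ft_bal_of_mem_spec p (hR hξR)
    have h₂ := le_norm_ft_bal_of_mem_spec p (hR hlamξR)
    rw [← ft_dilate p _ hlam] at h₂
    calc (ε * #A) ^ 4 = (ε * #A) ^ 2 * (ε * #A) ^ 2 := by ring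
      _ ≤ E ξ := by simp only [E]; gcongr
  calc (ε * #A) ^ 4 / p * (rDiv R lam : ℝ)
      = 1 / p * (#{y ∈ R | lam * y ∈ R} • (ε * #A) ^ 4) := by
        rw [rDiv_eq_card_filter, nsmul_eq_mul]; ring
    _ ≤ 1 / p * ∑ ξ ∈ {y ∈ R | lam * y ∈ R}, E ξ := by
        gcongr; exact Finset.card_nsmul_le_sum _ _ _ hE
    _ ≤ 1 / p * ∑ ξ, E ξ := by
        gcongr; exact Finset.subset_univ _
end

section
/- For R ⊆ Spec_ε(A)\{0}, the multiplicative energy satisfies (ε|A|)⁴/p · Eˣ(R) ≤ Σ_{x∈F_p} r²_{(f_A−f_A)·R}(x), where r_{(f_A−f_A)·R}(x) = Σ_{λ∈R} Σ_{a₁−a₂ = x/λ} f_A(a₁)f_A(a₂) with weights and Eˣ(R) = #{(x,y,z,w) ∈ R⁴ : xy = zw}. -/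
open Finset Complex

noncomputable def balR (p : ℕ) (A : Finset (ZMod p)) : ZMod p → ℝ :=
  fun x => (if x ∈ A then (1 : ℝ) else 0) - (A.card : ℝ) / p

/-!
Write `f = f_A` and `g(y) = ∑ₐ f(y + a) f(a)`, whose Fourier transform is `|f̂|²`. Dilating by `λ ≠ 0`
dilates the transform, so the transform of `x ↦ ∑_{λ ∈ R} g(x/λ)` at `ξ` is `∑_{λ ∈ R} |f̂(λξ)|²`
and by Parseval the right-hand side equals `p⁻¹ ∑_ξ (∑_{λ ∈ R} |f̂(λξ)|²)²`. On nonzero frequencies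
`f̂ = Â`, so every `λ ∈ R` with `λξ ∈ R` contributes at least `(ε|A|)²` to the inner sum, which is
therefore at least `(ε|A|)² r(ξ)` with `r(ξ) = #{λ ∈ R | λξ ∈ R}`; finally `∑_ξ r(ξ)² = Eˣ(R)`.
-/

open ZMod ComplexConjugate

section Fourier

variable {N : ℕ} [NeZero N]

lemma ft_eq_dft (f : ZMod N → ℂ) : ft N f = 𝓕 f := by
  ext ξ
  refine sum_congr rfl fun x _ ↦ ?_
  have h : -(x * ξ) = Int.cast (-(x.val * ξ.val : ℤ)) := by push_cast; simp
  rw [smul_eq_mul, mul_comm, h, stdAddChar_coe]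
  congr 2
  push_cast
  ring

lemma dft_const_apply_of_ne_zero (c : ℂ) {ξ : ZMod N} (hξ : ξ ≠ 0) :
    𝓕 (fun _ ↦ c) ξ = 0 := by
  rw [dft_apply, ← sum_smul]
  simp_rw [← mul_neg]
  rw [AddChar.sum_mulShift _ (isPrimitive_stdAddChar N), if_neg (neg_ne_zero.2 hξ), Nat.cast_zero,
    zero_smul]

lemma sum_mul_conj_eq_sum_dft_mul_conj_dft (G H : ZMod N → ℂ) :
    ∑ x, G x * conj (H x) = (N : ℂ)⁻¹ * ∑ ξ, 𝓕 G ξ * conj (𝓕 H ξ) := by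
  conv_lhs => rw [← dft.symm_apply_apply G]
  simp_rw [invDFT_apply, smul_eq_mul, mul_sum, sum_mul]
  rw [sum_comm]
  refine sum_congr rfl fun ξ _ ↦ ?_
  simp_rw [dft_apply H, map_sum, smul_eq_mul, map_mul (starRingEnd ℂ), ← AddChar.map_neg_eq_conj,
    neg_neg, mul_sum]
  refine sum_congr rfl fun x _ ↦ ?_
  rw [mul_comm x ξ]
  ring

lemma sum_sq_norm_eq_sum_sq_norm_dft (G : ZMod N → ℂ) :
    ∑ x, ‖G x‖ ^ 2 = (N : ℝ)⁻¹ * ∑ ξ, ‖𝓕 G ξ‖ ^ 2 := by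
  have h := sum_mul_conj_eq_sum_dft_mul_conj_dft G G
  simp_rw [mul_conj'] at h
  apply Complex.ofReal_injective
  push_cast
  exact h

/-- For real `F` this is the weighted representation function `r_{F-F}(y)` of the paper. -/
def autocorr (F : ZMod N → ℂ) (y : ZMod N) : ℂ := ∑ a, F (y + a) * conj (F a)

lemma dft_autocorr (F : ZMod N → ℂ) (ξ : ZMod N) :
    𝓕 (autocorr F) ξ = (‖𝓕 F ξ‖ : ℂ) ^ 2 := by
  have shift : ∀ a, ∑ y, stdAddChar (-(y * ξ)) * F (y + a) = stdAddChar (a * ξ) * 𝓕 F ξ := by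
    intro a
    rw [dft_apply, mul_sum]
    refine Fintype.sum_equiv (Equiv.addRight a) _ _ fun y ↦ ?_
    rw [Equiv.coe_addRight, smul_eq_mul, ← mul_assoc, ← AddChar.map_add_eq_mul]
    ring_nf
  rw [← mul_conj', dft_apply]
  simp_rw [autocorr, smul_sum, smul_eq_mul]
  rw [sum_comm]
  simp_rw [← mul_assoc, ← sum_mul, shift]
  rw [dft_apply F, map_sum, mul_sum]
  refine sum_congr rfl fun a _ ↦ ?_
  rw [smul_eq_mul, map_mul (starRingEnd ℂ), ← AddChar.map_neg_eq_conj, neg_neg]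
  ring

end Fourier

lemma le_norm_dft_bal_of_mem_spec {N : ℕ} [NeZero N] {A : Finset (ZMod N)} {ε : ℝ} {r : ZMod N}
    (hr : r ∈ (spec N A ε).erase 0) : ε * #A ≤ ‖𝓕 (bal N A) r‖ := by
  obtain ⟨hr0, hr⟩ := mem_erase.1 hr
  have hbal : bal N A = ind A - fun _ ↦ (#A : ℂ) / N := rfl
  rw [hbal, map_sub, Pi.sub_apply, dft_const_apply_of_ne_zero _ hr0, sub_zero, ← ft_eq_dft]
  exact (mem_filter.1 hr).2

lemma sq_mul_card_le_sum_sq_norm_dft_bal {N : ℕ} [NeZero N] {A : Finset (ZMod N)} {ε : ℝ}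
    (hε : 0 ≤ ε) {R : Finset (ZMod N)} (hR : R ⊆ (spec N A ε).erase 0) (ξ : ZMod N) :
    (ε * #A) ^ 2 * #{l ∈ R | l * ξ ∈ R} ≤ ∑ l ∈ R, ‖𝓕 (bal N A) (l * ξ)‖ ^ 2 :=
  calc (ε * #A) ^ 2 * #{l ∈ R | l * ξ ∈ R} = ∑ l ∈ R with l * ξ ∈ R, (ε * #A) ^ 2 := by
        rw [sum_const, nsmul_eq_mul, mul_comm]
    _ ≤ ∑ l ∈ R with l * ξ ∈ R, ‖𝓕 (bal N A) (l * ξ)‖ ^ 2 :=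
        sum_le_sum fun l hl ↦ pow_le_pow_left₀ (by positivity)
          (le_norm_dft_bal_of_mem_spec (hR (mem_filter.1 hl).2)) 2
    _ ≤ ∑ l ∈ R, ‖𝓕 (bal N A) (l * ξ)‖ ^ 2 :=
        sum_le_sum_of_subset_of_nonneg (filter_subset _ _) fun _ _ _ ↦ by positivity

lemma card_mulEnergy_eq_sum_sq {K : Type*} [Field K] [Fintype K] [DecidableEq K] {R : Finset K}
    (hR : 0 ∉ R) :
    #{q ∈ (R ×ˢ R) ×ˢ (R ×ˢ R) | q.1.1 * q.1.2 = q.2.1 * q.2.2}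
      = ∑ ξ, #{l ∈ R | l * ξ ∈ R} ^ 2 := by
  rw [card_eq_sum_card_fiberwise (f := fun q ↦ q.1.1 / q.2.2) (t := univ) fun _ _ ↦ mem_univ _]
  refine sum_congr rfl fun ξ _ ↦ ?_
  rw [sq, ← card_product]
  symm
  refine card_bij' (fun lm _ ↦ ((lm.1 * ξ, lm.2), (lm.2 * ξ, lm.1))) (fun q _ ↦ (q.2.2, q.1.2))
    ?_ ?_ ?_ ?_
  · rintro ⟨l, m⟩ h
    simp only [mem_product, mem_filter] at h ⊢
    obtain ⟨⟨hl, hlξ⟩, hm, hmξ⟩ := h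
    refine ⟨⟨⟨⟨hlξ, hm⟩, hmξ, hl⟩, by ring⟩, ?_⟩
    field_simp [ne_of_mem_of_not_mem hl hR]
  · rintro ⟨⟨x, y⟩, z, w⟩ h
    simp only [mem_product, mem_filter] at h ⊢
    obtain ⟨⟨⟨⟨hx, hy⟩, hz, hw⟩, hxy⟩, rfl⟩ := h
    have hw0 : w ≠ 0 := ne_of_mem_of_not_mem hw hR
    refine ⟨⟨hw, by field_simp; exact hx⟩, hy, ?_⟩
    convert hz using 1
    field_simp
    linear_combination hxy
  · rintro ⟨l, m⟩ _
    rfl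
  · rintro ⟨⟨x, y⟩, z, w⟩ h
    simp only [mem_product, mem_filter] at h
    obtain ⟨⟨⟨⟨-, -⟩, -, hw⟩, hxy⟩, rfl⟩ := h
    have hw0 : w ≠ 0 := ne_of_mem_of_not_mem hw hR
    simp only [Prod.mk.injEq, and_true]
    constructor
    · field_simp
    · field_simp
      linear_combination hxy

section Dilation

variable {p : ℕ} [Fact p.Prime]

lemma dft_comp_div (G : ZMod p → ℂ) {l : ZMod p} (hl : l ≠ 0) (ξ : ZMod p) :
    𝓕 (fun x ↦ G (x / l)) ξ = 𝓕 G (l * ξ) := by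
  simpa [div_eq_inv_mul] using dft_comp_unitMul G (Units.mk0 l hl)⁻¹ ξ

lemma sum_sq_sum_autocorr_div_eq (f : ZMod p → ℝ) {R : Finset (ZMod p)} (hR : 0 ∉ R) :
    ∑ x, (∑ l ∈ R, ∑ a, f (x / l + a) * f a) ^ 2
      = (p : ℝ)⁻¹ * ∑ ξ, (∑ l ∈ R, ‖𝓕 (fun x ↦ (f x : ℂ)) (l * ξ)‖ ^ 2) ^ 2 := by
  set F : ZMod p → ℂ := fun x ↦ (f x : ℂ)
  set G : ZMod p → ℂ := ∑ l ∈ R, fun x ↦ autocorr F (x / l)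
  have hG : ∀ x, G x = ((∑ l ∈ R, ∑ a, f (x / l + a) * f a : ℝ) : ℂ) := by
    intro x
    simp [G, F, autocorr]
  have hGhat : ∀ ξ, 𝓕 G ξ = ((∑ l ∈ R, ‖𝓕 F (l * ξ)‖ ^ 2 : ℝ) : ℂ) := by
    intro ξ
    rw [map_sum, Finset.sum_apply]
    push_cast
    refine sum_congr rfl fun l hl ↦ ?_
    rw [dft_comp_div _ (ne_of_mem_of_not_mem hl hR), dft_autocorr]
  have hG' := sum_sq_norm_eq_sum_sq_norm_dft G
  simp only [hG, hGhat, Complex.norm_real, Real.norm_eq_abs, sq_abs] at hG'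
  exact hG'

end Dilation

lemma ofReal_comp_balR (p : ℕ) (A : Finset (ZMod p)) : (fun x ↦ (balR p A x : ℂ)) = bal p A := by
  ext x
  by_cases hx : x ∈ A <;> simp [balR, bal, ind, hx]

theorem stmt15 (p : ℕ) [Fact p.Prime] (A : Finset (ZMod p))
    (ε : ℝ) (hε : ε ∈ Set.Ioc (0 : ℝ) 1)
    (R : Finset (ZMod p)) (hR : R ⊆ (spec p A ε).erase 0) :
    (ε * A.card) ^ 4 / p *
        (((((R ×ˢ R) ×ˢ (R ×ˢ R)).filter
            fun q => q.1.1 * q.1.2 = q.2.1 * q.2.2).card : ℝ))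
      ≤ ∑ x : ZMod p,
          (∑ lam ∈ R, ∑ a : ZMod p, balR p A (x / lam + a) * balR p A a) ^ 2 := by
  have hR0 : (0 : ZMod p) ∉ R := fun h ↦ by simpa using hR h
  rw [sum_sq_sum_autocorr_div_eq _ hR0, ofReal_comp_balR, card_mulEnergy_eq_sum_sq hR0,
    div_eq_inv_mul, mul_assoc, Nat.cast_sum, mul_sum]
  gcongr with ξ
  calc (ε * #A) ^ 4 * ((#{l ∈ R | l * ξ ∈ R} ^ 2 : ℕ) : ℝ)
      = ((ε * #A) ^ 2 * #{l ∈ R | l * ξ ∈ R}) ^ 2 := by push_cast; ring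
    _ ≤ _ := pow_le_pow_left₀ (by positivity) (sq_mul_card_le_sum_sq_norm_dft_bal hε.1.le hR ξ) 2
end
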